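/- arXiv:1911.06014 — 4 statements merged into one kernel-verified Lean document; each statement's English description precedes it below -/
import Mathlib

section
/- If g : R^n → R is convex differentiable with L-Lipschitz gradient, then g* is L⁻¹-strongly convex on the domain where it is finite. -/
/-!
An `L`-Lipschitz gradient gives the quadratic upper bound
`g u ≤ g x + ⟪∇g x, u - x⟫ + L/2 ‖u - x‖²`; applied at `x = a p + b q` towards `p` and `q`, the
linear terms cancel and `a g p + b g q ≤ g x + a b L/2 ‖p - q‖²`. For `y, z` in the domain of `g*`
and any `x`, choose `p, q` with `a p + b q = x` and `p - q = (y - z)/L`: then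
`⟪x, a y + b z⟫ - g x ≤ a (⟪p, y⟫ - g p) + b (⟪q, z⟫ - g q) - a b/(2L) ‖y - z‖²`, and taking the
supremum over `x` gives the `L⁻¹`-strong convexity of `g*`.
-/

open Set
open scoped RealInnerProductSpace

section

variable {E : Type*} [NormedAddCommGroup E] [InnerProductSpace ℝ E]

theorem HasGradientAt.hasDerivAt_comp_add_smul [CompleteSpace E] {g : E → ℝ} {g' x d : E} {t : ℝ}
    (hg : HasGradientAt g g' (x + t • d)) :
    HasDerivAt (fun s : ℝ => g (x + s • d)) ⟪g', d⟫ t := by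
  have hline : HasDerivAt (fun s : ℝ => x + s • d) d t := by
    simpa using ((hasDerivAt_id t).smul_const d).const_add x
  simpa [Function.comp_def] using hg.hasFDerivAt.comp_hasDerivAt t hline

theorem le_add_inner_add_sq_of_lipschitz_gradient [CompleteSpace E] {L : ℝ} {g : E → ℝ}
    {g' : E → E} (hdiff : ∀ x, HasGradientAt g (g' x) x)
    (hlip : ∀ x y, ‖g' x - g' y‖ ≤ L * ‖x - y‖) (x u : E) :
    g u ≤ g x + ⟪g' x, u - x⟫ + L / 2 * ‖u - x‖ ^ 2 := by
  set d := u - x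
  have hf : ∀ t : ℝ, HasDerivAt (fun s : ℝ => g (x + s • d) - s * ⟪g' x, d⟫)
      (⟪g' (x + t • d), d⟫ - ⟪g' x, d⟫) t := fun t =>
    ((hdiff _).hasDerivAt_comp_add_smul).sub (by simpa using (hasDerivAt_id t).mul_const _)
  have hB : ∀ t : ℝ, HasDerivAt (fun s : ℝ => g x + L / 2 * s ^ 2 * ‖d‖ ^ 2)
      (L * t * ‖d‖ ^ 2) t := fun t =>
    ((((hasDerivAt_pow 2 t).const_mul (L / 2)).mul_const (‖d‖ ^ 2)).const_add (g x)).congr_deriv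
      (by ring)
  have hderiv_le : ∀ t ∈ Ico (0 : ℝ) 1,
      ⟪g' (x + t • d), d⟫ - ⟪g' x, d⟫ ≤ L * t * ‖d‖ ^ 2 := fun t ht => by
    calc ⟪g' (x + t • d), d⟫ - ⟪g' x, d⟫ = ⟪g' (x + t • d) - g' x, d⟫ :=
          (inner_sub_left _ _ _).symm
      _ ≤ ‖g' (x + t • d) - g' x‖ * ‖d‖ := real_inner_le_norm _ _
      _ ≤ L * ‖(x + t • d) - x‖ * ‖d‖ := by gcongr; exact hlip _ _
      _ = L * t * ‖d‖ ^ 2 := by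
          rw [add_sub_cancel_left, norm_smul, Real.norm_of_nonneg ht.1]; ring
  have key := image_le_of_deriv_right_le_deriv_boundary
    (fun t _ => (hf t).continuousAt.continuousWithinAt)
    (fun t _ => (hf t).hasDerivWithinAt) (by simp)
    (fun t _ => (hB t).continuousAt.continuousWithinAt)
    (fun t _ => (hB t).hasDerivWithinAt) hderiv_le (right_mem_Icc.2 zero_le_one)
  simp only [one_smul, one_mul, one_pow, mul_one, d, add_sub_cancel] at key
  linarith

/-- `(-L)`-strong concavity is the two-point form of the quadratic upper bound. -/
theorem strongConcaveOn_neg_of_lipschitz_gradient [CompleteSpace E] {L : ℝ} {g : E → ℝ}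
    {g' : E → E} (hdiff : ∀ x, HasGradientAt g (g' x) x)
    (hlip : ∀ x y, ‖g' x - g' y‖ ≤ L * ‖x - y‖) : StrongConcaveOn univ (-L) g := by
  refine ⟨convex_univ, fun p _ q _ a b ha hb hab => ?_⟩
  set x := a • p + b • q
  have hp : p - x = b • (p - q) := by linear_combination (norm := module) -hab • p
  have hq : q - x = -(a • (p - q)) := by linear_combination (norm := module) -hab • q
  have bound_p := le_add_inner_add_sq_of_lipschitz_gradient hdiff hlip x p
  have bound_q := le_add_inner_add_sq_of_lipschitz_gradient hdiff hlip x q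
  rw [hp, real_inner_smul_right, norm_smul, Real.norm_of_nonneg hb] at bound_p
  rw [hq, inner_neg_right, real_inner_smul_right, norm_neg, norm_smul,
    Real.norm_of_nonneg ha] at bound_q
  simp only [smul_eq_mul]
  linear_combination a * bound_p + b * bound_q + (g x + L / 2 * a * b * ‖p - q‖ ^ 2) * hab

/-- Outside `fenchelConjugateDomain g`, where `g* y = +∞`, `sSup` returns the junk value `0`. -/
noncomputable def fenchelConjugate (g : E → ℝ) (y : E) : ℝ := sSup ((fun x => ⟪x, y⟫ - g x) '' univ)

def fenchelConjugateDomain (g : E → ℝ) : Set E :=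
  {y | BddAbove ((fun x => ⟪x, y⟫ - g x) '' univ)}

theorem convex_fenchelConjugateDomain (g : E → ℝ) : Convex ℝ (fenchelConjugateDomain g) := by
  rintro y ⟨My, hMy⟩ z ⟨Mz, hMz⟩ a b ha hb hab
  refine ⟨a * My + b * Mz, ?_⟩
  rintro _ ⟨x, -, rfl⟩
  have hy : ⟪x, y⟫ - g x ≤ My := hMy ⟨x, mem_univ x, rfl⟩
  have hz : ⟪x, z⟫ - g x ≤ Mz := hMz ⟨x, mem_univ x, rfl⟩
  simp only [inner_add_right, real_inner_smul_right]
  linear_combination a * hy + b * hz + g x * hab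

theorem inner_sub_le_fenchelConjugate {g : E → ℝ} {y : E} (hy : y ∈ fenchelConjugateDomain g)
    (x : E) : ⟪x, y⟫ - g x ≤ fenchelConjugate g y :=
  le_csSup hy ⟨x, mem_univ x, rfl⟩

theorem StrongConcaveOn.strongConvexOn_fenchelConjugate {L : ℝ} {g : E → ℝ}
    (hg : StrongConcaveOn univ (-L) g) (hL : 0 < L) :
    StrongConvexOn (fenchelConjugateDomain g) L⁻¹ (fenchelConjugate g) := by
  refine ⟨convex_fenchelConjugateDomain g, fun y hy z hz a b ha hb hab => ?_⟩
  refine csSup_le (univ_nonempty.image _) ?_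
  rintro _ ⟨x, -, rfl⟩
  set w := L⁻¹ • (y - z)
  have hx : a • (x + b • w) + b • (x - a • w) = x := by
    linear_combination (norm := module) hab • x
  have hconc := hg.2 (mem_univ (x + b • w)) (mem_univ (x - a • w)) ha hb hab
  have hpq : (x + b • w) - (x - a • w) = w := by linear_combination (norm := module) hab • w
  have hw_norm : ‖w‖ = L⁻¹ * ‖y - z‖ := by
    rw [norm_smul, Real.norm_of_nonneg (inv_nonneg.2 hL.le)]
  have hw_inner : ⟪w, y - z⟫ = L⁻¹ * ‖y - z‖ ^ 2 := by
    rw [real_inner_smul_left, real_inner_self_eq_norm_sq]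
  have hpairing :
      ⟪x, a • y + b • z⟫ = a * ⟪x + b • w, y⟫ + b * ⟪x - a • w, z⟫ - a * b * ⟪w, y - z⟫ := by
    simp only [inner_add_left, inner_sub_left, inner_add_right, inner_sub_right,
      real_inner_smul_left, real_inner_smul_right]
    ring
  have hy' := inner_sub_le_fenchelConjugate hy (x + b • w)
  have hz' := inner_sub_le_fenchelConjugate hz (x - a • w)
  rw [hx, hpq, hw_norm] at hconc
  simp only [smul_eq_mul] at hconc ⊢
  rw [hpairing, hw_inner]
  linear_combination
    a * hy' + b * hz' + hconc + (a * b / 2 * L⁻¹ * ‖y - z‖ ^ 2) * mul_inv_cancel₀ hL.ne'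

end

theorem conjugate_of_smooth_is_strongly_convex_general
    (n : ℕ) (L : ℝ) (hL : 0 < L)
    (g : EuclideanSpace ℝ (Fin n) → ℝ)
    (g' : EuclideanSpace ℝ (Fin n) → EuclideanSpace ℝ (Fin n))
    (hdiff : ∀ x, HasGradientAt g (g' x) x)
    (hlip : ∀ x y, ‖g' x - g' y‖ ≤ L * ‖x - y‖)
    (gstar : EuclideanSpace ℝ (Fin n) → ℝ)
    (hgstar : ∀ y, gstar y = sSup ((fun x => (inner ℝ x y : ℝ) - g x) '' Set.univ)) :
    StrongConvexOn {y | BddAbove ((fun x => (inner ℝ x y : ℝ) - g x) '' Set.univ)} L⁻¹ gstar := by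
  obtain rfl : gstar = fenchelConjugate g := funext hgstar
  exact (strongConcaveOn_neg_of_lipschitz_gradient hdiff hlip).strongConvexOn_fenchelConjugate hL

theorem conjugate_of_smooth_is_strongly_convex
    (n : ℕ) (L : ℝ) (hL : 0 < L)
    (g : EuclideanSpace ℝ (Fin n) → ℝ)
    (g' : EuclideanSpace ℝ (Fin n) → EuclideanSpace ℝ (Fin n))
    (hconv : ConvexOn ℝ Set.univ g)
    (hdiff : ∀ x, HasGradientAt g (g' x) x)
    (hlip : ∀ x y, ‖g' x - g' y‖ ≤ L * ‖x - y‖)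
    (gstar : EuclideanSpace ℝ (Fin n) → ℝ)
    (hgstar : ∀ y, gstar y = sSup ((fun x => (inner ℝ x y : ℝ) - g x) '' Set.univ)) :
    StrongConvexOn {y | BddAbove ((fun x => (inner ℝ x y : ℝ) - g x) '' Set.univ)} L⁻¹ gstar :=
  conjugate_of_smooth_is_strongly_convex_general n L hL g g' hdiff hlip gstar hgstar
end

section
/- Suppose a convex function d : R^N → R has optimal value d* attained on a nonempty closed convex set Y*, and there exist σ' > 0 and R' > 0 such that d(y) − d* ≥ (σ'/2)·dist(y,Y*)² whenever dist(y,Y*) ≤ R'. Then for all y ∈ R^N, d(y) − d* ≥ min( (σ'/2)·dist(y,Y*)², (σ'R'/2)·dist(y,Y*) ). -/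
open Metric

theorem global_growth_from_local_quadratic_growth
    (N : ℕ)
    (d : EuclideanSpace ℝ (Fin N) → ℝ)
    (hconv : ConvexOn ℝ Set.univ d)
    (Ystar : Set (EuclideanSpace ℝ (Fin N)))
    (hYne : Ystar.Nonempty) (hYclosed : IsClosed Ystar) (hYconv : Convex ℝ Ystar)
    (dstar : ℝ)
    (hopt : ∀ z ∈ Ystar, d z = dstar)
    (hmin : ∀ y, dstar ≤ d y)
    (σ' R' : ℝ) (hσ : 0 < σ') (hR : 0 < R')
    (hlocal : ∀ y, infDist y Ystar ≤ R' →
      d y - dstar ≥ σ' / 2 * (infDist y Ystar)^2) :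
    ∀ y, d y - dstar
      ≥ min (σ' / 2 * (infDist y Ystar)^2) (σ' * R' / 2 * infDist y Ystar) := by
  intro y
  set r := infDist y Ystar with hr
  by_cases hcase : r ≤ R'
  · exact le_trans (min_le_left _ _) (hlocal y hcase)
  · push_neg at hcase
    have hrpos : 0 < r := lt_trans hR hcase
    obtain ⟨z, hz, hdz⟩ := hYclosed.exists_infDist_eq_dist hYne y
    set t : ℝ := R' / r with htdef
    have ht0 : 0 < t := div_pos hR hrpos
    have ht1 : t < 1 := (div_lt_one hrpos).mpr hcase
    set w : EuclideanSpace ℝ (Fin N) := (1 - t) • z + t • y with hw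
    have hyz : dist y z = r := hdz.symm
    have hwz : dist w z = t * r := by
      have : w - z = t • (y - z) := by
        rw [hw]; module
      rw [dist_eq_norm, this, norm_smul, Real.norm_eq_abs, abs_of_pos ht0,
        ← dist_eq_norm, hyz]
    have hyw : dist y w = (1 - t) * r := by
      have : y - w = (1 - t) • (y - z) := by
        rw [hw]; module
      rw [dist_eq_norm, this, norm_smul, Real.norm_eq_abs,
        abs_of_pos (by linarith), ← dist_eq_norm, hyz]
    have hwdist : infDist w Ystar = R' := by
      have h1 : infDist w Ystar ≤ t * r := hwz ▸ infDist_le_dist_of_mem hz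
      have h2 : r ≤ infDist w Ystar + dist y w := infDist_le_infDist_add_dist
      have htr : t * r = R' := div_mul_cancel₀ R' hrpos.ne'
      rw [hyw] at h2
      nlinarith
    have hdw : d w - dstar ≥ σ' / 2 * R' ^ 2 := by
      have := hlocal w (le_of_eq hwdist)
      rwa [hwdist] at this
    have hconvw : d w ≤ (1 - t) * d z + t * d y := by
      have := hconv.2 (Set.mem_univ z) (Set.mem_univ y)
        (by linarith : (0:ℝ) ≤ 1 - t) ht0.le (by ring)
      simpa [hw, smul_eq_mul] using this
    rw [hopt z hz] at hconvw
    have key : t * (d y - dstar) ≥ σ' / 2 * R' ^ 2 := by nlinarith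
    have : d y - dstar ≥ σ' * R' / 2 * r := by
      have htr : t * r = R' := div_mul_cancel₀ R' hrpos.ne'
      nlinarith [hmin y]
    exact le_trans (min_le_right _ _) this
end

section
/- Under the assumptions of the previous statement (local quadratic growth with constants σ', R' on the set dist(y,Y*) ≤ R'), the quadratic growth property holds on the sublevel set {y : d(y) ≤ d* + σ'(R')²/2}: for all y with d(y) − d* ≤ σ'(R')²/2 one has d(y) − d* ≥ (σ'/2)·dist(y,Y*)². -/
/-!
Let `D = dist(y, Y*) > R'` and let `z` be a point of `Y*` nearest to `y`. The point `w` on the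
segment `[z, y]` at distance `R'` from `z` is still at distance exactly `R'` from `Y*`, so local
growth gives `d w - d* ≥ σ' R'² / 2`, while convexity along the segment gives
`d w - d* ≤ (R' / D) (d y - d*)`. Hence `d y - d* ≥ σ' R' D / 2 > σ' R'² / 2`: every point of the
sublevel set lies within distance `R'` of `Y*`, where the local bound applies.
-/

open Metric AffineMap Set

variable {E : Type*} [NormedAddCommGroup E] [NormedSpace ℝ E]

theorem ConvexOn.map_lineMap_sub_le {s : Set E} {f : E → ℝ} (hf : ConvexOn ℝ s f) {x y : E}
    (hx : x ∈ s) (hy : y ∈ s) {t : ℝ} (ht₀ : 0 ≤ t) (ht₁ : t ≤ 1) :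
    f (lineMap x y t) - f x ≤ t * (f y - f x) := by
  have := hf.2 hx hy (sub_nonneg.2 ht₁) ht₀ (sub_add_cancel 1 t)
  rw [lineMap_apply_module]
  simp only [smul_eq_mul] at this
  linarith

theorem infDist_lineMap_of_infDist_eq_dist {s : Set E} {y z : E} (hz : z ∈ s)
    (hyz : infDist y s = dist y z) {t : ℝ} (ht₀ : 0 ≤ t) (ht₁ : t ≤ 1) :
    infDist (lineMap z y t) s = t * dist y z := by
  have hzw : dist (lineMap z y t) z = t * dist y z := by
    rw [dist_lineMap_left, Real.norm_of_nonneg ht₀, dist_comm]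
  have hyw : dist y (lineMap z y t) = (1 - t) * dist y z := by
    rw [dist_comm, dist_lineMap_right, Real.norm_of_nonneg (sub_nonneg.2 ht₁), dist_comm]
  refine le_antisymm (hzw ▸ infDist_le_dist_of_mem hz) ?_
  have := infDist_le_infDist_add_dist (x := y) (y := lineMap z y t) (s := s)
  rw [hyw, hyz] at this
  linarith

theorem ConvexOn.mul_infDist_le_of_growth_at_infDist [ProperSpace E] {f : E → ℝ}
    (hf : ConvexOn ℝ univ f) {s : Set E} (hs : IsClosed s) (hne : s.Nonempty) {m : ℝ}
    (hm : ∀ z ∈ s, f z = m) {R c : ℝ} (hR : 0 < R)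
    (hgrowth : ∀ w, infDist w s = R → c ≤ f w - m) {y : E} (hy : R ≤ infDist y s) :
    c * infDist y s ≤ R * (f y - m) := by
  obtain ⟨z, hz, hyz⟩ := hs.exists_infDist_eq_dist hne y
  set D := infDist y s
  have hD : 0 < D := hR.trans_le hy
  have ht₀ : 0 ≤ R / D := by positivity
  have ht₁ : R / D ≤ 1 := (div_le_one hD).2 hy
  have hw : infDist (lineMap z y (R / D)) s = R := by
    rw [infDist_lineMap_of_infDist_eq_dist hz hyz ht₀ ht₁, ← hyz]
    field_simp
  have hconv := hf.map_lineMap_sub_le (mem_univ z) (mem_univ y) ht₀ ht₁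
  rw [hm z hz] at hconv
  calc c * D ≤ R / D * (f y - m) * D := by gcongr; linarith [hgrowth _ hw]
    _ = R * (f y - m) := by field_simp

theorem quadratic_growth_on_sublevel_set_general
    (N : ℕ)
    (d : EuclideanSpace ℝ (Fin N) → ℝ)
    (hconv : ConvexOn ℝ Set.univ d)
    (Ystar : Set (EuclideanSpace ℝ (Fin N)))
    (hYne : Ystar.Nonempty) (hYclosed : IsClosed Ystar)
    (dstar : ℝ)
    (hopt : ∀ z ∈ Ystar, d z = dstar)
    (σ' R' : ℝ) (hσ : 0 < σ') (hR : 0 < R')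
    (hlocal : ∀ y, infDist y Ystar ≤ R' →
      d y - dstar ≥ σ' / 2 * (infDist y Ystar)^2) :
    ∀ y, d y - dstar ≤ σ' * R'^2 / 2 →
      d y - dstar ≥ σ' / 2 * (infDist y Ystar)^2 := by
  intro y hy
  rcases le_or_gt (infDist y Ystar) R' with hnear | hfar
  · exact hlocal y hnear
  have hlinear := hconv.mul_infDist_le_of_growth_at_infDist hYclosed hYne hopt hR
    (c := σ' / 2 * R' ^ 2) (fun w hw ↦ hw ▸ hlocal w hw.le) hfar.le
  have : σ' / 2 * R' ^ 2 * infDist y Ystar ≤ σ' / 2 * R' ^ 2 * R' := by nlinarith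
  have hpos : 0 < σ' / 2 * R' ^ 2 := by positivity
  exact absurd (le_of_mul_le_mul_left this hpos) hfar.not_ge

theorem quadratic_growth_on_sublevel_set
    (N : ℕ)
    (d : EuclideanSpace ℝ (Fin N) → ℝ)
    (hconv : ConvexOn ℝ Set.univ d)
    (Ystar : Set (EuclideanSpace ℝ (Fin N)))
    (hYne : Ystar.Nonempty) (hYclosed : IsClosed Ystar) (hYconv : Convex ℝ Ystar)
    (dstar : ℝ)
    (hopt : ∀ z ∈ Ystar, d z = dstar)
    (hmin : ∀ y, dstar ≤ d y)
    (σ' R' : ℝ) (hσ : 0 < σ') (hR : 0 < R')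
    (hlocal : ∀ y, infDist y Ystar ≤ R' →
      d y - dstar ≥ σ' / 2 * (infDist y Ystar)^2) :
    ∀ y, d y - dstar ≤ σ' * R'^2 / 2 →
      d y - dstar ≥ σ' / 2 * (infDist y Ystar)^2 :=
  quadratic_growth_on_sublevel_set_general N d hconv Ystar hYne hYclosed dstar hopt σ' R' hσ hR
    hlocal
end

section
/- From the one-step recursion and quadratic growth, RCD converges linearly: if d(y) − d* ≥ (σ/2)dist(y,Y*)² on the sublevel set {d(y) ≤ d(y⁰)}, then E[d(y^k) − d*] ≤ (1 − σ/(m(σ+1)))^k (d(y⁰) − d* + ½dist(y⁰,Y*)²). -/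
/-!
A block step of RCD is a proximal-gradient step in one block. The block descent lemma and the
three-point property of the prox bound `d(y⁺) + ½‖y⁺ - w‖²` for any `w`; averaging over the `m`
blocks and using the gradient inequality of the convex smooth part `d̃` (which follows from
convexity and the block descent bounds) gives, with `w` a nearest point of `Y*`,
`E[V(y⁺)] ≤ V(y) - (d(y) - d*)/m` for the potential `V = d - d* + ½ dist(·, Y*)²`.
Quadratic growth turns `d(y) - d*` into `σ/(σ+1) · V(y)`, and every step decreases `d`, so the
iterates stay in the sublevel set where quadratic growth holds and `V` contracts by
`1 - σ/(m(σ+1))` per step.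
-/

open Metric Set Filter Topology

lemma le_of_forall_sub_mul_le {a b C : ℝ} (h : ∀ t : ℝ, 0 < t → t ≤ 1 → a - t * C ≤ b) :
    a ≤ b := by
  have hlim : Tendsto (fun t : ℝ => a - t * C) (𝓝[>] 0) (𝓝 a) := by
    have : Continuous fun t : ℝ => a - t * C := by fun_prop
    simpa using (this.tendsto 0).mono_left nhdsWithin_le_nhds
  refine le_of_tendsto hlim ?_
  filter_upwards [Ioc_mem_nhdsGT one_pos] with t ht using h t ht.1 ht.2

lemma ConvexOn.add_le_of_forall_sub_smul_le {E : Type*} [AddCommGroup E] [Module ℝ E]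
    {f : E → ℝ} (hf : ConvexOn ℝ univ f) {y h : E} {S C : ℝ}
    (hle : ∀ t : ℝ, 0 < t → t ≤ 1 → f (y - t • h) ≤ f y - t * S + t ^ 2 * C) :
    f y + S ≤ f (y + h) := by
  refine le_of_forall_sub_mul_le (C := C) fun t ht ht1 => ?_
  have ht' : 0 < 1 + t := by linarith
  have hconv : f ((1 / (1 + t)) • (y - t • h) + (t / (1 + t)) • (y + h))
      ≤ (1 / (1 + t)) • f (y - t • h) + (t / (1 + t)) • f (y + h) :=
    hf.2 (mem_univ _) (mem_univ _) (by positivity) (by positivity) (by field_simp)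
  rw [show (1 / (1 + t)) • (y - t • h) + (t / (1 + t)) • (y + h) = y by
    match_scalars <;> field_simp; ring] at hconv
  rw [smul_eq_mul, smul_eq_mul, div_mul_eq_mul_div, div_mul_eq_mul_div, ← add_div,
    le_div_iff₀ ht'] at hconv
  nlinarith [hle t ht ht1]

lemma ConvexOn.prox_three_point {E : Type*} [NormedAddCommGroup E] [InnerProductSpace ℝ E]
    {s : E → ℝ} (hs : ConvexOn ℝ univ s) {a q : E}
    (hq : ∀ z, 1 / 2 * ‖q - a‖ ^ 2 + s q ≤ 1 / 2 * ‖z - a‖ ^ 2 + s z) (c : E) :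
    1 / 2 * ‖q - a‖ ^ 2 + s q + 1 / 2 * ‖c - q‖ ^ 2 ≤ 1 / 2 * ‖c - a‖ ^ 2 + s c := by
  have hca : ‖c - a‖ ^ 2 = ‖q - a‖ ^ 2 + 2 * inner ℝ (q - a) (c - q) + ‖c - q‖ ^ 2 := by
    rw [← norm_add_sq_real, sub_add_sub_cancel']
  suffices h : s q - inner ℝ (q - a) (c - q) ≤ s c by linarith
  refine le_of_forall_sub_mul_le (C := ‖c - q‖ ^ 2 / 2) fun t ht ht1 => ?_
  have hmin := hq (q + t • (c - q))
  have hconv : s ((1 - t) • q + t • c) ≤ (1 - t) • s q + t • s c :=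
    hs.2 (mem_univ q) (mem_univ c) (by linarith) ht.le (by ring)
  rw [show (1 - t) • q + t • c = q + t • (c - q) by module, smul_eq_mul, smul_eq_mul] at hconv
  rw [add_sub_right_comm, norm_add_sq_real, real_inner_smul_right, norm_smul,
    Real.norm_of_nonneg ht.le] at hmin
  nlinarith

lemma convexOn_sSup_image_of_convexOn {α E : Type*} [AddCommGroup E] [Module ℝ E] {X : Set α}
    (hX : X.Nonempty) {φ : α → E → ℝ} (hφ : ∀ t ∈ X, ConvexOn ℝ univ (φ t))
    (hbdd : ∀ z, BddAbove ((φ · z) '' X)) :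
    ConvexOn ℝ univ fun z => sSup ((φ · z) '' X) := by
  refine ⟨convex_univ, fun z₁ _ z₂ _ a b ha hb hab => csSup_le (hX.image _) ?_⟩
  rintro _ ⟨t, ht, rfl⟩
  calc φ t (a • z₁ + b • z₂) ≤ a • φ t z₁ + b • φ t z₂ :=
        (hφ t ht).2 (mem_univ _) (mem_univ _) ha hb hab
    _ ≤ a • sSup ((φ · z₁) '' X) + b • sSup ((φ · z₂) '' X) := by
        gcongr <;> exact le_csSup (hbdd _) (mem_image_of_mem _ ht)

lemma le_add_inner_add_sq_of_lipschitz_gradient_s16 {F : Type*} [NormedAddCommGroup F]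
    [InnerProductSpace ℝ F] [CompleteSpace F] {f : F → ℝ} {g : F → F} {L : ℝ}
    (hg : ∀ x, HasGradientAt f (g x) x) (hL : ∀ x y, ‖g x - g y‖ ≤ L * ‖x - y‖) (a b : F) :
    f b ≤ f a + inner ℝ (g a) (b - a) + L / 2 * ‖b - a‖ ^ 2 := by
  set h := b - a
  let ψ : ℝ → ℝ := fun s => f (a + s • h) - s * inner ℝ (g a) h - s ^ 2 * (L / 2 * ‖h‖ ^ 2)
  have hψ : ∀ s, HasDerivAt ψ
      (inner ℝ (g (a + s • h)) h - inner ℝ (g a) h - s * (L * ‖h‖ ^ 2)) s := by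
    intro s
    have hline : HasDerivAt (fun s : ℝ => a + s • h) h s := by
      simpa using ((hasDerivAt_id s).smul_const h).const_add a
    refine ((((hg _).hasFDerivAt.comp_hasDerivAt s hline).sub
      (hasDerivAt_mul_const (inner ℝ (g a) h))).sub
      ((hasDerivAt_pow 2 s).mul_const (L / 2 * ‖h‖ ^ 2))).congr_deriv ?_
    simp only [InnerProductSpace.toDual_apply_apply]
    ring
  have hanti : AntitoneOn ψ (Icc 0 1) := by
    refine antitoneOn_of_deriv_nonpos (convex_Icc 0 1)
      (fun s _ => (hψ s).continuousAt.continuousWithinAt)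
      (fun s _ => (hψ s).differentiableAt.differentiableWithinAt) fun s hs => ?_
    rw [interior_Icc] at hs
    rw [(hψ s).deriv, sub_nonpos, ← inner_sub_left]
    calc inner ℝ (g (a + s • h) - g a) h ≤ ‖g (a + s • h) - g a‖ * ‖h‖ := real_inner_le_norm _ _
      _ ≤ L * ‖s • h‖ * ‖h‖ := by
        gcongr
        simpa using hL (a + s • h) a
      _ = s * (L * ‖h‖ ^ 2) := by
        rw [norm_smul, Real.norm_of_nonneg hs.1.le]
        ring
  have := hanti (left_mem_Icc.2 zero_le_one) (right_mem_Icc.2 zero_le_one) zero_le_one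
  simp only [ψ, one_smul, zero_smul, add_zero, add_sub_cancel, zero_mul, sub_zero, one_mul,
    one_pow, zero_pow two_ne_zero, h] at this
  linarith

lemma div_add_one_mul_add_half_le {σ a b : ℝ} (hσ : 0 ≤ σ) (h : σ / 2 * b ≤ a) :
    σ / (σ + 1) * (a + 1 / 2 * b) ≤ a := by
  rw [div_mul_eq_mul_div, div_le_iff₀ (by positivity)]
  linarith

section Iterates

variable {α ι : Type*} {T : ι → α → α} {Y : ∀ k, (Fin k → ι) → α} {y₀ : α}

lemma iterate_mem_of_mapsTo {S : Set α} (hT : ∀ i, MapsTo (T i) S S) (hy₀ : y₀ ∈ S)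
    (hY₀ : ∀ ω, Y 0 ω = y₀)
    (hY : ∀ k (ω : Fin (k + 1) → ι), Y (k + 1) ω = T (ω (Fin.last k)) (Y k (Fin.init ω))) :
    ∀ k ω, Y k ω ∈ S
  | 0, ω => hY₀ ω ▸ hy₀
  | k + 1, ω => hY k ω ▸ hT _ (iterate_mem_of_mapsTo hT hy₀ hY₀ hY k _)

lemma sum_iterate_le_pow_mul [Fintype ι] {S : Set α} (hT : ∀ i, MapsTo (T i) S S) {V : α → ℝ}
    {c : ℝ} (hc : 0 ≤ c) (hV : ∀ y ∈ S, ∑ i, V (T i y) ≤ c * V y) (hy₀ : y₀ ∈ S)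
    (hY₀ : ∀ ω, Y 0 ω = y₀)
    (hY : ∀ k (ω : Fin (k + 1) → ι), Y (k + 1) ω = T (ω (Fin.last k)) (Y k (Fin.init ω))) :
    ∀ k, ∑ ω, V (Y k ω) ≤ c ^ k * V y₀
  | 0 => by simp [hY₀]
  | k + 1 => calc
      ∑ ω, V (Y (k + 1) ω) = ∑ ω : Fin k → ι, ∑ i, V (T i (Y k ω)) := by
        rw [← (Fin.snocEquiv fun _ => ι).sum_comp, Fintype.sum_prod_type_right]
        simp [hY, Fin.snocEquiv]
      _ ≤ ∑ ω : Fin k → ι, c * V (Y k ω) :=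
        Finset.sum_le_sum fun ω _ => hV _ (iterate_mem_of_mapsTo hT hy₀ hY₀ hY k ω)
      _ ≤ c ^ (k + 1) * V y₀ := by
        rw [← Finset.mul_sum, pow_succ', mul_assoc]
        exact mul_le_mul_of_nonneg_left (sum_iterate_le_pow_mul hT hc hV hy₀ hY₀ hY k) hc

end Iterates

section BlockUpdate

variable {ι E : Type*} [DecidableEq ι]

def blockUpdate (y : PiLp 2 (fun _ : ι => E)) (i : ι) (c : E) : PiLp 2 (fun _ : ι => E) :=
  WithLp.toLp 2 (Function.update y.ofLp i c)

@[simp]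
lemma blockUpdate_apply (y : PiLp 2 (fun _ : ι => E)) (i : ι) (c : E) (j : ι) :
    blockUpdate y i c j = Function.update y.ofLp i c j := rfl

@[simp]
lemma blockUpdate_eq_self (y : PiLp 2 (fun _ : ι => E)) (i : ι) : blockUpdate y i (y i) = y := by
  simp [blockUpdate]

lemma blockUpdate_le_add_inner [NormedAddCommGroup E] [InnerProductSpace ℝ E] [CompleteSpace E]
    {f : PiLp 2 (fun _ : ι => E) → ℝ} {G : PiLp 2 (fun _ : ι => E) → ι → E} {L : ℝ}
    (hgrad : ∀ (y : ι → E) i, HasGradientAt (fun t => f (WithLp.toLp 2 (Function.update y i t)))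
      (G (WithLp.toLp 2 y) i) (y i))
    (hlip : ∀ (y : ι → E) i t,
      ‖G (WithLp.toLp 2 (Function.update y i t)) i - G (WithLp.toLp 2 y) i‖ ≤ L * ‖t - y i‖)
    (y : PiLp 2 (fun _ : ι => E)) (i : ι) (c : E) :
    f (blockUpdate y i c) ≤ f y + inner ℝ (G y i) (c - y i) + L / 2 * ‖c - y i‖ ^ 2 := by
  have hgrad' (t : E) :
      HasGradientAt (fun s => f (blockUpdate y i s)) (G (blockUpdate y i t) i) t := by
    simpa [blockUpdate, Function.update_idem] using hgrad (Function.update y.ofLp i t) i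
  have hlip' (t t' : E) :
      ‖G (blockUpdate y i t) i - G (blockUpdate y i t') i‖ ≤ L * ‖t - t'‖ := by
    simpa [blockUpdate, Function.update_idem] using hlip (Function.update y.ofLp i t') i t
  simpa using le_add_inner_add_sq_of_lipschitz_gradient_s16 hgrad' hlip' (y i) c

variable [Fintype ι]

lemma sum_blockUpdate (φ : ι → E → ℝ) (y : PiLp 2 (fun _ : ι => E)) (i : ι) (c : E) :
    ∑ j, φ j (blockUpdate y i c j) = ∑ j, φ j (y j) - φ i (y i) + φ i c := by
  rw [← Finset.sum_erase_add _ _ (Finset.mem_univ i),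
    ← Finset.sum_erase_add _ _ (Finset.mem_univ i)]
  simp only [blockUpdate_apply, Function.update_self]
  rw [Finset.sum_congr rfl fun j hj => by rw [Function.update_of_ne (Finset.ne_of_mem_erase hj)]]
  ring

lemma norm_blockUpdate_sub_sq [SeminormedAddCommGroup E] (y w : PiLp 2 (fun _ : ι => E)) (i : ι)
    (c : E) : ‖blockUpdate y i c - w‖ ^ 2 = ‖y - w‖ ^ 2 - ‖y i - w i‖ ^ 2 + ‖c - w i‖ ^ 2 := by
  simp only [PiLp.norm_sq_eq_of_L2, PiLp.sub_apply]
  exact sum_blockUpdate (fun j x => ‖x - w j‖ ^ 2) y i c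

lemma sum_inv_card_smul_blockUpdate [AddCommGroup E] [Module ℝ E] [Nonempty ι]
    (y v : PiLp 2 (fun _ : ι => E)) :
    ∑ i, (Fintype.card ι : ℝ)⁻¹ • blockUpdate y i (y i + (Fintype.card ι : ℝ) • v i) = y + v := by
  have hM : (Fintype.card ι : ℝ) ≠ 0 := by positivity
  ext j
  simp only [WithLp.ofLp_sum, WithLp.ofLp_smul, Finset.sum_apply, Pi.smul_apply,
    blockUpdate_apply, Function.update_apply, WithLp.ofLp_add, Pi.add_apply]
  have hterm (i : ι) : (if j = i then y i + (Fintype.card ι : ℝ) • v i else y j)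
      = y j + if j = i then (Fintype.card ι : ℝ) • v j else 0 := by
    split_ifs with h <;> simp [h]
  simp only [hterm, smul_add, Finset.sum_add_distrib, ← Finset.smul_sum, Finset.sum_const,
    Finset.card_univ, smul_ite, smul_zero, Finset.sum_ite_eq, Finset.mem_univ, if_true, smul_smul,
    ← Nat.cast_smul_eq_nsmul ℝ, inv_mul_cancel₀ hM, one_smul]

variable [NormedAddCommGroup E] [InnerProductSpace ℝ E]

/-- The average of the `card ι` block steps from `y` of length `card ι • t` is the full step
`y - t • (z - y)`, so Jensen and the block descent bounds give a second-order upper bound for `f`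
along the segment, whose slope at `y` is then at most `f z - f y` by convexity. -/
lemma ConvexOn.add_sum_inner_le [Nonempty ι] {f : PiLp 2 (fun _ : ι => E) → ℝ}
    {G : PiLp 2 (fun _ : ι => E) → ι → E} {L : ℝ} (hf : ConvexOn ℝ univ f)
    (hdesc : ∀ y i c,
      f (blockUpdate y i c) ≤ f y + inner ℝ (G y i) (c - y i) + L / 2 * ‖c - y i‖ ^ 2)
    (y z : PiLp 2 (fun _ : ι => E)) :
    f y + ∑ i, inner ℝ (G y i) (z i - y i) ≤ f z := by
  set M : ℝ := (Fintype.card ι : ℝ)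
  have hM : M ≠ 0 := by positivity
  have := hf.add_le_of_forall_sub_smul_le (y := y) (h := z - y)
    (S := ∑ i, inner ℝ (G y i) (z i - y i)) (C := M * L / 2 * ‖z - y‖ ^ 2) fun t ht ht1 => ?_
  · simpa using this
  calc f (y - t • (z - y))
      = f (∑ i, M⁻¹ • blockUpdate y i (y i + M • (-t • (z - y)) i)) := by
        rw [sum_inv_card_smul_blockUpdate, sub_eq_add_neg, neg_smul]
    _ ≤ ∑ i, M⁻¹ • f (blockUpdate y i (y i + M • (-t • (z - y)) i)) :=
        hf.map_sum_le (fun _ _ => by positivity) (by simp [M, hM]) fun _ _ => mem_univ _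
    _ ≤ ∑ i, M⁻¹ • (f y + inner ℝ (G y i) (M • (-t • (z - y)) i)
          + L / 2 * ‖M • (-t • (z - y)) i‖ ^ 2) := by
        gcongr with i
        simpa using hdesc y i (y i + M • (-t • (z - y)) i)
    _ = f y - t * ∑ i, inner ℝ (G y i) (z i - y i) + t ^ 2 * (M * L / 2 * ‖z - y‖ ^ 2) := by
        simp only [PiLp.smul_apply, inner_smul_right, norm_smul, mul_pow, smul_eq_mul,
          Finset.sum_add_distrib, ← Finset.mul_sum, PiLp.norm_sq_eq_of_L2, PiLp.sub_apply,
          Finset.sum_const, Finset.card_univ, nsmul_eq_mul, norm_neg, Real.norm_eq_abs, sq_abs]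
        field_simp
        ring

end BlockUpdate

section ProxGradient

variable {ι E : Type*} [DecidableEq ι] [Fintype ι] [NormedAddCommGroup E] [InnerProductSpace ℝ E]
  {f d : PiLp 2 (fun _ : ι => E) → ℝ} {G : PiLp 2 (fun _ : ι => E) → ι → E} {s : ι → E → ℝ}

lemma blockUpdate_prox_add_le (hd : ∀ y, d y = f y + ∑ i, s i (y i))
    {y : PiLp 2 (fun _ : ι => E)} {i : ι} {q : E}
    (hdesc : f (blockUpdate y i q) ≤ f y + inner ℝ (G y i) (q - y i) + 1 / 2 * ‖q - y i‖ ^ 2)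
    (hs : ConvexOn ℝ univ (s i))
    (hq : ∀ z, 1 / 2 * ‖q - (y i - G y i)‖ ^ 2 + s i q ≤ 1 / 2 * ‖z - (y i - G y i)‖ ^ 2 + s i z)
    (c : E) :
    d (blockUpdate y i q) + 1 / 2 * ‖c - q‖ ^ 2
      ≤ d y + inner ℝ (G y i) (c - y i) + 1 / 2 * ‖c - y i‖ ^ 2 + s i c - s i (y i) := by
  have hprox := hs.prox_three_point hq c
  have hexpand (x : E) : ‖x - (y i - G y i)‖ ^ 2
      = ‖x - y i‖ ^ 2 + 2 * inner ℝ (G y i) (x - y i) + ‖G y i‖ ^ 2 := by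
    rw [sub_sub_eq_add_sub, add_sub_right_comm, norm_add_sq_real, real_inner_comm]
  rw [hexpand, hexpand] at hprox
  rw [hd, hd, sum_blockUpdate (fun j x => s j x)]
  linarith

lemma blockUpdate_prox_le (hd : ∀ y, d y = f y + ∑ i, s i (y i))
    {y : PiLp 2 (fun _ : ι => E)} {i : ι} {q : E}
    (hdesc : f (blockUpdate y i q) ≤ f y + inner ℝ (G y i) (q - y i) + 1 / 2 * ‖q - y i‖ ^ 2)
    (hs : ConvexOn ℝ univ (s i))
    (hq : ∀ z, 1 / 2 * ‖q - (y i - G y i)‖ ^ 2 + s i q ≤ 1 / 2 * ‖z - (y i - G y i)‖ ^ 2 + s i z) :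
    d (blockUpdate y i q) ≤ d y := by
  have := blockUpdate_prox_add_le hd hdesc hs hq (y i)
  simp only [sub_self, inner_zero_right, norm_zero] at this
  nlinarith [sq_nonneg ‖y i - q‖]

variable [Nonempty ι] (hd : ∀ y, d y = f y + ∑ i, s i (y i)) (hf : ConvexOn ℝ univ f)
  (hdesc : ∀ y i c,
    f (blockUpdate y i c) ≤ f y + inner ℝ (G y i) (c - y i) + 1 / 2 * ‖c - y i‖ ^ 2)
  (hs : ∀ i, ConvexOn ℝ univ (s i)) {y : PiLp 2 (fun _ : ι => E)} {q : ι → E}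
  (hq : ∀ i z, 1 / 2 * ‖q i - (y i - G y i)‖ ^ 2 + s i (q i)
    ≤ 1 / 2 * ‖z - (y i - G y i)‖ ^ 2 + s i z)
include hd hf hdesc hs hq

lemma sum_blockUpdate_prox_le (w : PiLp 2 (fun _ : ι => E)) :
    ∑ i, (d (blockUpdate y i (q i)) - d w + 1 / 2 * ‖blockUpdate y i (q i) - w‖ ^ 2)
      ≤ Fintype.card ι * (d y - d w + 1 / 2 * ‖y - w‖ ^ 2) - (d y - d w) := by
  have hblock (i : ι) :
      d (blockUpdate y i (q i)) - d w + 1 / 2 * ‖blockUpdate y i (q i) - w‖ ^ 2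
        ≤ (d y - d w + 1 / 2 * ‖y - w‖ ^ 2)
          + (inner ℝ (G y i) (w i - y i) + s i (w i) - s i (y i)) := by
    have := blockUpdate_prox_add_le hd (hdesc y i (q i)) (hs i) (hq i) (w i)
    rw [norm_sub_rev (w i), norm_sub_rev (w i)] at this
    rw [norm_blockUpdate_sub_sq]
    linarith
  have hgrad := hf.add_sum_inner_le hdesc y w
  calc _ ≤ ∑ i, ((d y - d w + 1 / 2 * ‖y - w‖ ^ 2)
          + (inner ℝ (G y i) (w i - y i) + s i (w i) - s i (y i))) :=
        Finset.sum_le_sum fun i _ => hblock i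
    _ ≤ _ := by
      simp only [Finset.sum_add_distrib, Finset.sum_sub_distrib, Finset.sum_const,
        Finset.card_univ, nsmul_eq_mul]
      linarith [hd y, hd w]

lemma sum_potential_blockUpdate_le {Ystar : Set (PiLp 2 (fun _ : ι => E))} {dstar σ : ℝ}
    {w : PiLp 2 (fun _ : ι => E)} (hw : w ∈ Ystar) (hyw : infDist y Ystar = dist y w)
    (hdw : d w = dstar) (hσ : 0 ≤ σ) (hQG : σ / 2 * infDist y Ystar ^ 2 ≤ d y - dstar) :
    ∑ i, (d (blockUpdate y i (q i)) - dstar + 1 / 2 * infDist (blockUpdate y i (q i)) Ystar ^ 2)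
      ≤ (Fintype.card ι - σ / (σ + 1)) * (d y - dstar + 1 / 2 * infDist y Ystar ^ 2) := by
  have hdist (x : PiLp 2 (fun _ : ι => E)) : infDist x Ystar ^ 2 ≤ ‖x - w‖ ^ 2 := by
    rw [← dist_eq_norm]
    exact pow_le_pow_left₀ infDist_nonneg (infDist_le_dist_of_mem hw) 2
  calc _ ≤ ∑ i, (d (blockUpdate y i (q i)) - d w + 1 / 2 * ‖blockUpdate y i (q i) - w‖ ^ 2) :=
        Finset.sum_le_sum fun i _ => by linarith [hdist (blockUpdate y i (q i))]
    _ ≤ Fintype.card ι * (d y - d w + 1 / 2 * ‖y - w‖ ^ 2) - (d y - d w) :=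
        sum_blockUpdate_prox_le hd hf hdesc hs hq w
    _ ≤ _ := by
      rw [hdw, ← dist_eq_norm, ← hyw, sub_mul]
      linarith [div_add_one_mul_add_half_le hσ hQG]

end ProxGradient

theorem rcd_linear_convergence_general
    (n m : ℕ) (hm : 0 < m)
    (X : Fin m → Set (EuclideanSpace ℝ (Fin n)))
    (hXne : ∀ i, (X i).Nonempty)
    (supp : Fin m → EuclideanSpace ℝ (Fin n) → ℝ)
    (hsupp : ∀ i z, supp i z = sSup ((fun t => (inner ℝ t z : ℝ)) '' X i))
    (hbdd : ∀ i z, BddAbove ((fun t => (inner ℝ t z : ℝ)) '' X i))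
    (dtil : PiLp 2 (fun _ : Fin m => EuclideanSpace ℝ (Fin n)) → ℝ)
    (hconv : ConvexOn ℝ Set.univ dtil)
    (G : PiLp 2 (fun _ : Fin m => EuclideanSpace ℝ (Fin n)) → Fin m → EuclideanSpace ℝ (Fin n))
    (hgrad : ∀ y i,
      HasGradientAt (fun t : EuclideanSpace ℝ (Fin n) => dtil (WithLp.toLp 2 (Function.update y i t))) (G (WithLp.toLp 2 y) i) (y i))
    (hlip : ∀ y i t, ‖G (WithLp.toLp 2 (Function.update y i t)) i - G (WithLp.toLp 2 y) i‖ ≤ ‖t - y i‖)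
    (d : PiLp 2 (fun _ : Fin m => EuclideanSpace ℝ (Fin n)) → ℝ)
    (hd : ∀ y, d y = dtil y + ∑ i, supp i (y i))
    (Ystar : Set (PiLp 2 (fun _ : Fin m => EuclideanSpace ℝ (Fin n))))
    (hYne : Ystar.Nonempty) (hYclosed : IsClosed Ystar)
    (dstar : ℝ)
    (hopt : ∀ z ∈ Ystar, d z = dstar)
    (y0 : PiLp 2 (fun _ : Fin m => EuclideanSpace ℝ (Fin n)))
    (σ : ℝ) (hσ : 0 < σ)
    (hQG : ∀ y, d y ≤ d y0 → d y - dstar ≥ σ / 2 * (infDist y Ystar)^2)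
    (p : PiLp 2 (fun _ : Fin m => EuclideanSpace ℝ (Fin n)) → Fin m → EuclideanSpace ℝ (Fin n))
    (hp : ∀ y i z, (1 / 2) * ‖p y i - (y i - G y i)‖^2 + supp i (p y i)
        ≤ (1 / 2) * ‖z - (y i - G y i)‖^2 + supp i z)
    (Y : ∀ k : ℕ, (Fin k → Fin m) → PiLp 2 (fun _ : Fin m => EuclideanSpace ℝ (Fin n)))
    (hY0 : ∀ ω, Y 0 ω = y0)
    (hYstep : ∀ k (ω : Fin (k + 1) → Fin m),
      Y (k + 1) ω
        = WithLp.toLp 2 (Function.update (WithLp.ofLp (Y k (fun j => ω j.castSucc))) (ω (Fin.last k))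
            (p (Y k (fun j => ω j.castSucc)) (ω (Fin.last k))))) :
    ∀ k : ℕ,
      (∑ ω : Fin k → Fin m, (d (Y k ω) - dstar)) / (m : ℝ)^k
        ≤ (1 - σ / (m * (σ + 1)))^k
            * (d y0 - dstar + (1 / 2) * (infDist y0 Ystar)^2) := by
  intro k
  have : Nonempty (Fin m) := ⟨⟨0, hm⟩⟩
  have hs (i : Fin m) : ConvexOn ℝ univ (supp i) := by
    rw [funext (hsupp i)]
    exact convexOn_sSup_image_of_convexOn (hXne i)
      (fun t _ => (innerₛₗ ℝ t).convexOn convex_univ) (hbdd i)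
  have hdesc := blockUpdate_le_add_inner (L := 1) hgrad (by simpa using hlip)
  have hmaps (i : Fin m) :
      MapsTo (fun y => blockUpdate y i (p y i)) {y | d y ≤ d y0} {y | d y ≤ d y0} :=
    fun y hy => (blockUpdate_prox_le hd (hdesc y i _) (hs i) (hp y i)).trans hy
  have hstep : ∀ y ∈ {y | d y ≤ d y0},
      ∑ i, (d (blockUpdate y i (p y i)) - dstar
          + 1 / 2 * infDist (blockUpdate y i (p y i)) Ystar ^ 2)
        ≤ (m - σ / (σ + 1)) * (d y - dstar + 1 / 2 * infDist y Ystar ^ 2) := by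
    intro y hy
    obtain ⟨w, hw, hyw⟩ := hYclosed.exists_infDist_eq_dist hYne y
    simpa using sum_potential_blockUpdate_le hd hconv hdesc hs (hp y) hw hyw (hopt w hw) hσ.le
      (hQG y hy)
  have hc : 0 ≤ (m : ℝ) - σ / (σ + 1) :=
    sub_nonneg.2 (((div_le_one (by positivity)).2 (by linarith)).trans (Nat.one_le_cast.2 hm))
  have hsum := sum_iterate_le_pow_mul (T := fun i y => blockUpdate y i (p y i))
    (V := fun y => d y - dstar + 1 / 2 * infDist y Ystar ^ 2) hmaps hc hstep
    (le_refl (d y0)) hY0 hYstep k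
  rw [div_le_iff₀ (by positivity)]
  calc ∑ ω, (d (Y k ω) - dstar)
      ≤ ∑ ω, (d (Y k ω) - dstar + 1 / 2 * infDist (Y k ω) Ystar ^ 2) :=
        Finset.sum_le_sum fun ω _ => by linarith [sq_nonneg (infDist (Y k ω) Ystar)]
    _ ≤ _ := hsum
    _ = _ := by
      rw [mul_right_comm, ← mul_pow]
      congr 2
      field_simp

theorem rcd_linear_convergence
    (n m : ℕ) (hm : 0 < m)
    (X : Fin m → Set (EuclideanSpace ℝ (Fin n)))
    (hXne : ∀ i, (X i).Nonempty) (hXclosed : ∀ i, IsClosed (X i))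
    (hXconv : ∀ i, Convex ℝ (X i))
    (supp : Fin m → EuclideanSpace ℝ (Fin n) → ℝ)
    (hsupp : ∀ i z, supp i z = sSup ((fun t => (inner ℝ t z : ℝ)) '' X i))
    (hbdd : ∀ i z, BddAbove ((fun t => (inner ℝ t z : ℝ)) '' X i))
    (dtil : PiLp 2 (fun _ : Fin m => EuclideanSpace ℝ (Fin n)) → ℝ)
    (hconv : ConvexOn ℝ Set.univ dtil)
    (G : PiLp 2 (fun _ : Fin m => EuclideanSpace ℝ (Fin n)) → Fin m → EuclideanSpace ℝ (Fin n))
    (hgrad : ∀ y i,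
      HasGradientAt (fun t : EuclideanSpace ℝ (Fin n) => dtil (WithLp.toLp 2 (Function.update y i t))) (G (WithLp.toLp 2 y) i) (y i))
    (hlip : ∀ y i t, ‖G (WithLp.toLp 2 (Function.update y i t)) i - G (WithLp.toLp 2 y) i‖ ≤ ‖t - y i‖)
    (d : PiLp 2 (fun _ : Fin m => EuclideanSpace ℝ (Fin n)) → ℝ)
    (hd : ∀ y, d y = dtil y + ∑ i, supp i (y i))
    (Ystar : Set (PiLp 2 (fun _ : Fin m => EuclideanSpace ℝ (Fin n))))
    (hYne : Ystar.Nonempty) (hYclosed : IsClosed Ystar) (hYconv : Convex ℝ Ystar)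
    (dstar : ℝ)
    (hopt : ∀ z ∈ Ystar, d z = dstar)
    (hmin : ∀ y, dstar ≤ d y)
    (y0 : PiLp 2 (fun _ : Fin m => EuclideanSpace ℝ (Fin n)))
    (σ : ℝ) (hσ : 0 < σ)
    (hQG : ∀ y, d y ≤ d y0 → d y - dstar ≥ σ / 2 * (infDist y Ystar)^2)
    (p : PiLp 2 (fun _ : Fin m => EuclideanSpace ℝ (Fin n)) → Fin m → EuclideanSpace ℝ (Fin n))
    (hp : ∀ y i z, (1 / 2) * ‖p y i - (y i - G y i)‖^2 + supp i (p y i)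
        ≤ (1 / 2) * ‖z - (y i - G y i)‖^2 + supp i z)
    (Y : ∀ k : ℕ, (Fin k → Fin m) → PiLp 2 (fun _ : Fin m => EuclideanSpace ℝ (Fin n)))
    (hY0 : ∀ ω, Y 0 ω = y0)
    (hYstep : ∀ k (ω : Fin (k + 1) → Fin m),
      Y (k + 1) ω
        = WithLp.toLp 2 (Function.update (WithLp.ofLp (Y k (fun j => ω j.castSucc))) (ω (Fin.last k))
            (p (Y k (fun j => ω j.castSucc)) (ω (Fin.last k))))) :
    ∀ k : ℕ,
      (∑ ω : Fin k → Fin m, (d (Y k ω) - dstar)) / (m : ℝ)^k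
        ≤ (1 - σ / (m * (σ + 1)))^k
            * (d y0 - dstar + (1 / 2) * (infDist y0 Ystar)^2) :=
  rcd_linear_convergence_general n m hm X hXne supp hsupp hbdd dtil hconv G hgrad hlip d hd Ystar
    hYne hYclosed dstar hopt y0 σ hσ hQG p hp Y hY0 hYstep
end
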